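/- For all integers r, f ≥ 0 and every a ∈ ℤ: q_{r+a}^{[f | r−f−1]}(x;z|b) = Σ_{k=0}^{f} q_{r−k+a}^{[r−k−1]}(x|b) · (e_k^{[f | k−1−f]}(z | τ^{k−r}b))^⋆, where ⋆ is the substitution b_{−i} ↦ −b_{i+1} for all i ≥ 0. The identity holds for every number of x-variables. -/

import Mathlib

open Finset

noncomputable section

variable {R : Type*} [CommRing R]

/-- The formal power series `1/(1 - x·u)`. -/
def geomSeries (x : R) : PowerSeries R := PowerSeries.mk fun m => x ^ m

/-- `e_u^{[k]}(c)`: the power series `∏_{i=1}^k (1 + c_i u)` for `k ≥ 0`, and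
`∏_{i=1}^{-k} (1 - c_i u)⁻¹` for `k < 0`.  The sequence `c` is read at indices `1, 2, …`. -/
def eSer (k : ℤ) (c : ℕ → R) : PowerSeries R :=
  if 0 ≤ k then ∏ i ∈ Finset.range k.toNat, (1 + PowerSeries.C (c (i + 1)) * PowerSeries.X)
  else ∏ i ∈ Finset.range (-k).toNat, geomSeries (c (i + 1))

/-- `q_u(x) = ∏_{i=1}^n (1 + x_i u)/(1 - x_i u)`, with `n` x-variables. -/
def qSer (n : ℕ) (x : ℕ → R) : PowerSeries R :=
  ∏ i ∈ Finset.range n,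
    ((1 + PowerSeries.C (x (i + 1)) * PowerSeries.X) * geomSeries (x (i + 1)))

/-- The coefficient of `u^m` (`m : ℤ`) of a power series; zero when `m < 0`. -/
def coeffZ (m : ℤ) (φ : PowerSeries R) : R :=
  if 0 ≤ m then PowerSeries.coeff m.toNat φ else 0

/-- `q_m^{[ℓ]}(x|c)`: the coefficient of `u^m` in `q_u(x)·e_u^{[ℓ]}(c)`. -/
def qC (m ℓ : ℤ) (n : ℕ) (x c : ℕ → R) : R := coeffZ m (qSer n x * eSer ℓ c)

/-- `q_m^{[k|ℓ]}(x;z|c)`: the coefficient of `u^m` in `q_u(x)·e_u^{[k]}(z)·e_u^{[ℓ]}(c)`. -/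
def qC2 (m k ℓ : ℤ) (n : ℕ) (x z c : ℕ → R) : R :=
  coeffZ m (qSer n x * eSer k z * eSer ℓ c)

/-- `e_m^{[k]}(c)`. -/
def eC (m k : ℤ) (c : ℕ → R) : R := coeffZ m (eSer k c)

/-- `e_m^{[k|ℓ]}(z|c)`: the coefficient of `u^m` in `e_u^{[k]}(z)·e_u^{[ℓ]}(c)`. -/
def eC2 (m k ℓ : ℤ) (z c : ℕ → R) : R := coeffZ m (eSer k z * eSer ℓ c)

/-- Extension of `b` to all integer indices using the convention `b_{-i} = -b_{i+1}` for
`i ≥ 0`; positive indices are untouched.  This also implements the `⋆` substitution. -/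
def bext (b : ℤ → R) : ℤ → R := fun j => if 0 < j then b j else -b (1 - j)

/-- `ε(0) = 1` and `ε(m) = 2·(-1)^m` for `m ≥ 1`. -/
def pfEps (m : ℕ) : ℤ := if m = 0 then 1 else 2 * (-1) ^ m

/-- The subscript `α_i + Σ_{j>i} m_{ij} − Σ_{j<i} m_{ji}` in the Schur–Pfaffian. -/
def pfIdx {r : ℕ} (α : Fin r → ℤ) (m : Fin r → Fin r → ℕ) (i : Fin r) : ℤ :=
  α i + ∑ j, (if i < j then (m i j : ℤ) else 0) - ∑ j, (if j < i then (m j i : ℤ) else 0)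

/-- The Schur–Pfaffian `Pf[c^{(1)}_{α_1} ⋯ c^{(r)}_{α_r}]`, as the (finitely supported) sum
over tuples of nonnegative integers `(m_{ij})_{1 ≤ i < j ≤ r}`. -/
def schurPf {r : ℕ} (c : Fin r → ℤ → R) (α : Fin r → ℤ) : R :=
  ∑ᶠ m ∈ {m : Fin r → Fin r → ℕ | ∀ i j, ¬ i < j → m i j = 0},
    (∏ i, ∏ j, if i < j then (pfEps (m i j) : R) else 1) * ∏ i, c i (pfIdx α m i)

/-- The alphabet of primed, unmarked and circled numbers. -/
inductive MSTEntry where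
  | prime : ℕ → MSTEntry
  | unmarked : ℕ → MSTEntry
  | circ : ℕ → MSTEntry
deriving DecidableEq

namespace MSTEntry

/-- Whether an entry is circled (`1`) or not (`0`). -/
def isCirc : MSTEntry → ℕ
  | circ _ => 1
  | _ => 0

/-- Key realizing the order `1' < 1 < 2' < 2 < ⋯` within each class. -/
def key : MSTEntry → ℕ
  | prime k => 2 * k - 1
  | unmarked k => 2 * k
  | circ k => k

/-- The numeric value of an entry. -/
def val : MSTEntry → ℕ
  | prime k => k
  | unmarked k => k
  | circ k => k

/-- The total order `1' < 1 < 2' < 2 < ⋯ < 1° < 2° < ⋯` on entries of positive value. -/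
def le (a b : MSTEntry) : Prop :=
  a.isCirc < b.isCirc ∨ (a.isCirc = b.isCirc ∧ a.key ≤ b.key)

end MSTEntry

/-- The shifted Young diagram of a strict partition `λ` of length `r`:
boxes `(i, j)` with `1 ≤ i ≤ r` and `i ≤ j ≤ λ_i + i - 1` (rows and columns 1-indexed). -/
def shiftedDiag (r : ℕ) (lam : ℕ → ℕ) : Set (ℕ × ℕ) :=
  {p | 1 ≤ p.1 ∧ p.1 ≤ r ∧ p.1 ≤ p.2 ∧ p.2 ≤ lam p.1 + p.1 - 1}

/-- `T` is a marked shifted tableau of the flagged strict partition `(λ, f)` whose unmarked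
and primed entries have numeric value at most `n` (normalized to `unmarked 0` off the
diagram). -/
def IsMST (n r : ℕ) (lam f : ℕ → ℕ) (T : ℕ × ℕ → MSTEntry) : Prop :=
  (∀ p, p ∉ shiftedDiag r lam → T p = .unmarked 0) ∧
  (∀ p ∈ shiftedDiag r lam, 1 ≤ (T p).val) ∧
  (∀ i j j', (i, j) ∈ shiftedDiag r lam → (i, j') ∈ shiftedDiag r lam → j ≤ j' →
    (T (i, j)).le (T (i, j'))) ∧
  (∀ i i' j, (i, j) ∈ shiftedDiag r lam → (i', j) ∈ shiftedDiag r lam → i ≤ i' →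
    (T (i, j)).le (T (i', j))) ∧
  (∀ i i' j k k', (i, j) ∈ shiftedDiag r lam → (i', j) ∈ shiftedDiag r lam → i < i' →
    T (i, j) = .unmarked k → T (i', j) = .unmarked k' → k < k') ∧
  (∀ i j j' k k', (i, j) ∈ shiftedDiag r lam → (i, j') ∈ shiftedDiag r lam → j < j' →
    T (i, j) = .prime k → T (i, j') = .prime k' → k < k') ∧
  (∀ i j j' k k', (i, j) ∈ shiftedDiag r lam → (i, j') ∈ shiftedDiag r lam → j < j' →
    T (i, j) = .circ k → T (i, j') = .circ k' → k < k') ∧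
  (∀ p ∈ shiftedDiag r lam, (T p).le (.circ (f p.1))) ∧
  (∀ p ∈ shiftedDiag r lam, ∀ k, (T p = .unmarked k ∨ T p = .prime k) → k ≤ n)

/-- The factor of the weight `(xz|b)^T` contributed by the entry at box `p`.  The convention
`b_{-i} = -b_{i+1}` is implemented by `bext`. -/
def mstFactor (x z : ℕ → R) (b : ℤ → R) (p : ℕ × ℕ) : MSTEntry → R
  | .unmarked k => x k + bext b ((p.2 : ℤ) - (p.1 : ℤ))
  | .prime k => x k - bext b ((p.2 : ℤ) - (p.1 : ℤ))
  | .circ k => z k + bext b ((k : ℤ) + (p.1 : ℤ) - (p.2 : ℤ))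

/-- The weight `(xz|b)^T` of a marked shifted tableau. -/
def mstWeight (r : ℕ) (lam : ℕ → ℕ) (x z : ℕ → R) (b : ℤ → R) (T : ℕ × ℕ → MSTEntry) : R :=
  ∏ i ∈ Finset.range r, ∏ j ∈ Finset.range (lam (i + 1)),
    mstFactor x z b (i + 1, i + 1 + j) (T (i + 1, i + 1 + j))

/-- The flagged factorial Q-function `Q_{λ,f}(x;z|b)`, with `n` x-variables. -/
def Qflag (n r : ℕ) (lam f : ℕ → ℕ) (x z : ℕ → R) (b : ℤ → R) : R :=
  ∑ᶠ T ∈ {T : ℕ × ℕ → MSTEntry | IsMST n r lam f T}, mstWeight r lam x z b T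

/-- Ivanov's factorial Q-function `Q_λ(x|b)`: the case of the zero flag (no circled
entries, so the z-variables do not occur). -/
def QIvanov (n r : ℕ) (lam : ℕ → ℕ) (x : ℕ → R) (b : ℤ → R) : R :=
  Qflag n r lam (fun _ => 0) x (fun _ => 0) b

/-- The skew Young diagram `κ/ν`: boxes `(i, j)` with `1 ≤ i ≤ r`, `ν_i < j ≤ κ_i`. -/
def skewDiag (r : ℕ) (kap nu : ℕ → ℕ) : Set (ℕ × ℕ) :=
  {p | 1 ≤ p.1 ∧ p.1 ≤ r ∧ nu p.1 < p.2 ∧ p.2 ≤ kap p.1}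

/-- `t` is a row-strict flagged tableau of `(κ/ν, f)` (normalized to `0` off the diagram). -/
def IsRST (r : ℕ) (kap nu f : ℕ → ℕ) (t : ℕ × ℕ → ℕ) : Prop :=
  (∀ p, p ∉ skewDiag r kap nu → t p = 0) ∧
  (∀ p ∈ skewDiag r kap nu, 1 ≤ t p) ∧
  (∀ i j j', (i, j) ∈ skewDiag r kap nu → (i, j') ∈ skewDiag r kap nu → j < j' →
    t (i, j) < t (i, j')) ∧
  (∀ i i' j, (i, j) ∈ skewDiag r kap nu → (i', j) ∈ skewDiag r kap nu → i ≤ i' →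
    t (i, j) ≤ t (i', j)) ∧
  (∀ p ∈ skewDiag r kap nu, t p ≤ f p.1)

/-- The weight `∏_{e ∈ T} (z_{|e|} + b_{|e| + r(e) - c(e)})` of a row-strict flagged tableau. -/
def rstWeight (r : ℕ) (kap nu : ℕ → ℕ) (z : ℕ → R) (b : ℤ → R) (t : ℕ × ℕ → ℕ) : R :=
  ∏ i ∈ Finset.range r, ∏ j ∈ Finset.range (kap (i + 1) - nu (i + 1)),
    (z (t (i + 1, nu (i + 1) + 1 + j)) +
      b ((t (i + 1, nu (i + 1) + 1 + j) : ℤ) + ((i : ℤ) + 1) - ((nu (i + 1) : ℤ) + 1 + (j : ℤ))))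

/-- The row-strict flagged skew factorial Schur polynomial `s̃_{κ/ν,f}(z|b)`. -/
def sTilde (r : ℕ) (kap nu f : ℕ → ℕ) (z : ℕ → R) (b : ℤ → R) : R :=
  ∑ᶠ t ∈ {t : ℕ × ℕ → ℕ | IsRST r kap nu f t}, rstWeight r kap nu z b t


/-!
Put `E_k = e_u^{[r-k]}(b)` and `D_k = e_u^{[f]}(z) · e_u^{[k-1-f]}(τ^{k-r}b)^⋆`. With the `⋆`
convention, `e_u^{[ℓ]}(b) = e_u^{[ℓ-1]}(b) · (1 + b^⋆_ℓ u)` for every `ℓ ∈ ℤ`, and passing from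
`k` to `k + 1` moves exactly this factor (with `ℓ = r - k`) from `E` to `D`. For any such transfer,
induction on `m` gives `Σ_{k<m} [u^k]D_k · u^k E_{k+1} = trunc_m(D_m) · E_m`. At `m = f + 1`,
`D_{f+1} = e_u^{[f]}(z)` is a polynomial of degree `f`, so the truncation is exact and
`e_u^{[f]}(z) e_u^{[r-f-1]}(b) = Σ_{k ≤ f} [u^k]D_k · u^k E_{k+1}`. Multiplying by `q_u(x)` and
taking the coefficient of `u^{r+a}` gives the identity.
-/

open PowerSeries

theorem geomSeries_mul_one_sub (c : R) : geomSeries c * (1 - C c * X) = 1 := by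
  have h := congrArg (rescale c) (mk_one_mul_one_sub_eq_one (S := R))
  simpa [rescale_mk, rescale_X, geomSeries] using h

theorem bext_one_sub (b : ℤ → R) (j : ℤ) : bext b (1 - j) = -bext b j := by
  unfold bext
  split_ifs <;> first | omega | simp

theorem eSer_zero (c : ℕ → R) : eSer 0 c = 1 := by
  simp [eSer]

theorem eSer_natCast (k : ℕ) (c : ℕ → R) :
    eSer k c = ∏ i ∈ range k, (1 + C (c (i + 1)) * X) := by
  simp [eSer]

theorem eSer_neg_natCast (m : ℕ) (c : ℕ → R) :
    eSer (-m) c = ∏ i ∈ range m, geomSeries (c (i + 1)) := by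
  rcases m with _ | m
  · simp [eSer]
  · rw [eSer, if_neg (by omega)]
    simp

theorem eSer_eq_eSer_sub_one_mul (b : ℤ → R) (ℓ : ℤ) :
    eSer ℓ (fun i => b i) = eSer (ℓ - 1) (fun i => b i) * (1 + C (bext b ℓ) * X) := by
  rcases le_or_gt ℓ 0 with hℓ | hℓ
  · obtain ⟨m, rfl⟩ : ∃ m : ℕ, ℓ = -m := ⟨(-ℓ).toNat, by omega⟩
    have hb : bext b (-m) = -b (m + 1) := by
      simp only [bext, if_neg (show ¬ (0 : ℤ) < -m by omega)]; ring_nf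
    rw [show -(m : ℤ) - 1 = -((m + 1 : ℕ) : ℤ) by push_cast; ring, eSer_neg_natCast,
      eSer_neg_natCast, prod_range_succ, mul_assoc, hb, map_neg, neg_mul, ← sub_eq_add_neg]
    push_cast
    rw [geomSeries_mul_one_sub, mul_one]
  · obtain ⟨m, rfl⟩ : ∃ m : ℕ, ℓ = m + 1 := ⟨(ℓ - 1).toNat, by omega⟩
    rw [add_sub_cancel_right, ← Nat.cast_succ, eSer_natCast, eSer_natCast, prod_range_succ]
    simp [bext]

theorem eSer_neg_sub_one (m : ℕ) (c : ℕ → R) :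
    eSer (-m - 1) c = geomSeries (c 1) * eSer (-m) (fun i => c (i + 1)) := by
  rw [show -(m : ℤ) - 1 = -((m + 1 : ℕ) : ℤ) by push_cast; ring, eSer_neg_natCast,
    eSer_neg_natCast, prod_range_succ', mul_comm]

theorem coe_trunc_succ_mul_one_add (m : ℕ) (φ : R⟦X⟧) (β : R) :
    (trunc (m + 1) (φ * (1 + C β * X)) : R⟦X⟧) =
      (trunc m φ : R⟦X⟧) * (1 + C β * X) + C (coeff m φ) * X ^ m := by
  have hX (ψ : R⟦X⟧) : ψ * (1 + C β * X) = ψ + C β * (X * ψ) := by ring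
  ext (_ | j)
  · rcases m with _ | m <;> simp [hX, coeff_trunc]
  · simp only [hX, map_add, Polynomial.coeff_coe, coeff_trunc, coeff_C_mul, coeff_succ_X_mul,
      coeff_X_pow, Polynomial.coe_add, mul_ite, mul_one, mul_zero]
    split_ifs <;> first | omega | (subst_vars; ring)

section Expansion

variable {β : ℕ → R} {D E : ℕ → R⟦X⟧} {N : ℕ}

theorem sum_C_coeff_mul_X_pow_mul_eq_trunc_mul
    (hE : ∀ k < N, E k = E (k + 1) * (1 + C (β k) * X))
    (hD : ∀ k < N, D (k + 1) = D k * (1 + C (β k) * X)) {m : ℕ} (hm : m ≤ N) :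
    ∑ k ∈ range m, C (coeff k (D k)) * X ^ k * E (k + 1) = trunc m (D m) * E m := by
  induction m with
  | zero => simp
  | succ m ih =>
    rw [sum_range_succ, ih (by omega), hD m (by omega), coe_trunc_succ_mul_one_add,
      hE m (by omega)]
    ring

theorem sum_C_coeff_mul_X_pow_mul_eq_mul
    (hE : ∀ k < N, E k = E (k + 1) * (1 + C (β k) * X))
    (hD : ∀ k < N, D (k + 1) = D k * (1 + C (β k) * X)) (hN : (trunc N (D N) : R⟦X⟧) = D N) :
    ∑ k ∈ range N, C (coeff k (D k)) * X ^ k * E (k + 1) = D N * E N := by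
  rw [sum_C_coeff_mul_X_pow_mul_eq_trunc_mul hE hD le_rfl, hN]

end Expansion

theorem coe_trunc_eSer_natCast (k : ℕ) (c : ℕ → R) :
    (trunc (k + 1) (eSer k c) : R⟦X⟧) = eSer k c := by
  have hcoe : eSer k c = ((∏ i ∈ range k, (1 + Polynomial.C (c (i + 1)) * Polynomial.X) :
      Polynomial R) : R⟦X⟧) := by
    rw [eSer_natCast, ← Polynomial.coeToPowerSeries.ringHom_apply, map_prod]
    simp [Polynomial.coeToPowerSeries.ringHom_apply]
  have hdeg :
      (∏ i ∈ range k, (1 + Polynomial.C (c (i + 1)) * Polynomial.X)).natDegree < k + 1 := by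
    refine (Polynomial.natDegree_prod_le _ _).trans_lt ?_
    calc ∑ i ∈ range k, (1 + Polynomial.C (c (i + 1)) * Polynomial.X).natDegree
        ≤ ∑ _i ∈ range k, 1 := by
          apply sum_le_sum; intro i _; compute_degree
      _ < k + 1 := by simp
  rw [hcoe, trunc_coe_eq_self hdeg]

theorem eSer_mul_eSer_eq_sum (z : ℕ → R) (b : ℤ → R) (f : ℕ) (r : ℤ) :
    eSer f z * eSer (r - f - 1) (fun i => b i) =
      ∑ k ∈ range (f + 1),
        C (coeff k (eSer f z * eSer ((k : ℤ) - 1 - f) (fun i => bext b (i + k - r)))) * X ^ k *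
          eSer (r - k - 1) (fun i => b i) := by
  set D : ℕ → R⟦X⟧ := fun k =>
    eSer f z * eSer ((k : ℤ) - 1 - f) (fun i => bext b (i + k - r))
  have hE : ∀ k < f + 1, eSer (r - k) (fun i => b i) =
      eSer (r - (k + 1 : ℕ)) (fun i => b i) * (1 + C (bext b (r - k)) * X) := by
    intro k _
    rw [eSer_eq_eSer_sub_one_mul, Nat.cast_succ, sub_add_eq_sub_sub]
  have hD : ∀ k < f + 1, D (k + 1) = D k * (1 + C (bext b (r - k)) * X) := by
    intro k hk
    obtain ⟨m, rfl⟩ : ∃ m, f = k + m := ⟨f - k, by omega⟩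
    have hc : bext b ((1 : ℕ) + k - r) = -bext b (r - k) := by
      rw [← bext_one_sub]; congr 1; push_cast; ring
    simp only [D, show (k : ℤ) - 1 - ((k + m : ℕ) : ℤ) = -m - 1 by push_cast; ring,
      show ((k + 1 : ℕ) : ℤ) - 1 - ((k + m : ℕ) : ℤ) = -m by push_cast; ring,
      eSer_neg_sub_one, hc]
    have hg : geomSeries (-bext b (r - k)) * (1 + C (bext b (r - k)) * X) = 1 := by
      simpa using geomSeries_mul_one_sub (-bext b (r - k))
    have hshift : (fun i : ℕ => bext b ((i + 1 : ℕ) + k - r)) =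
        fun i : ℕ => bext b (i + (k + 1 : ℕ) - r) := by
      funext i; push_cast; ring_nf
    rw [hshift, mul_assoc, mul_right_comm (geomSeries _), hg, one_mul]
  have hDN : D (f + 1) = eSer f z := by
    simp only [D, Nat.cast_succ, add_sub_cancel_right, sub_self, eSer_zero, mul_one]
  have hN : (trunc (f + 1) (D (f + 1)) : R⟦X⟧) = D (f + 1) := by
    rw [hDN, coe_trunc_eSer_natCast]
  have := sum_C_coeff_mul_X_pow_mul_eq_mul hE hD hN
  simp only [hDN, Nat.cast_succ, sub_add_eq_sub_sub] at this
  exact this.symm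

theorem coeffZ_natCast (k : ℕ) (φ : R⟦X⟧) : coeffZ k φ = coeff k φ := by
  simp [coeffZ]

theorem coeffZ_sum {ι : Type*} (s : Finset ι) (m : ℤ) (φ : ι → R⟦X⟧) :
    coeffZ m (∑ i ∈ s, φ i) = ∑ i ∈ s, coeffZ m (φ i) := by
  unfold coeffZ
  split_ifs <;> simp

theorem coeffZ_C_mul_X_pow_mul (m : ℤ) (k : ℕ) (c : R) (φ : R⟦X⟧) :
    coeffZ m (C c * X ^ k * φ) = c * coeffZ (m - k) φ := by
  unfold coeffZ
  rw [mul_assoc, coeff_C_mul, coeff_X_pow_mul']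
  split_ifs <;> first | omega | simp

/-- For all `r, f ≥ 0` and `a ∈ ℤ`:
`q_{r+a}^{[f|r−f−1]}(x;z|b) = Σ_{k=0}^{f} q_{r−k+a}^{[r−k−1]}(x|b) ·
(e_k^{[f|k−1−f]}(z|τ^{k−r}b))^⋆`, for every number `n` of x-variables. -/
theorem statement_7 (R : Type*) [CommRing R] (n r f : ℕ) (a : ℤ)
    (x z : ℕ → R) (b : ℤ → R) :
    qC2 ((r : ℤ) + a) (f : ℤ) ((r : ℤ) - (f : ℤ) - 1) n x z (fun i => b (i : ℤ)) =
      ∑ k ∈ Finset.range (f + 1),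
        qC ((r : ℤ) - (k : ℤ) + a) ((r : ℤ) - (k : ℤ) - 1) n x (fun i => b (i : ℤ)) *
          eC2 (k : ℤ) (f : ℤ) ((k : ℤ) - 1 - (f : ℤ)) z
            (fun i => bext b ((i : ℤ) + (k : ℤ) - (r : ℤ))) := by
  rw [qC2, mul_assoc, eSer_mul_eSer_eq_sum, mul_sum, coeffZ_sum]
  refine sum_congr rfl fun k _ => ?_
  rw [mul_left_comm, coeffZ_C_mul_X_pow_mul, qC, eC2, coeffZ_natCast, mul_comm,
    show (r : ℤ) + a - k = r - k + a by ring]
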